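/- Cauchy integral formula for derivatives: if f : ℂ → ℂ is complex-differentiable on an open set containing the closed disc of radius R centered at c (with R > 0), then for every n ∈ ℕ and every z₀ with ‖z₀ − c‖ < R, the n-th complex derivative satisfies f⁽ⁿ⁾(z₀) = (n!/(2πi)) ∮_{|z−c|=R} f(z)/(z − z₀)^{n+1} dz, the contour integral being taken counterclockwise. -/

import Mathlib

/-!
Induction on `n`, trading `f` for its slope `dslope f w` at the point `w`. On the circle,
`dslope f w z = (z - w)⁻¹ • (f z - f w)`, and the `f w` part integrates to zero because
`(z - w) ^ (-(n + 2))` has a primitive; so the integral of order `n + 1` for `f` is the integral of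
order `n` for `dslope f w`. On the derivative side, the Taylor coefficients of `dslope f w` at `w`
are those of `f` shifted by one, which produces the factor `n + 1`. The case `n = 0` is the Cauchy
integral formula.
-/

open Metric Complex Real

section Analytic

variable {𝕜 E : Type*} [NontriviallyNormedField 𝕜] [NormedAddCommGroup E] [NormedSpace 𝕜 E]
  [CompleteSpace E] {f : 𝕜 → E} {x : 𝕜}

theorem HasFPowerSeriesAt.iteratedDeriv_eq_factorial_smul_coeff
    {p : FormalMultilinearSeries 𝕜 𝕜 E} (hp : HasFPowerSeriesAt f p x) (n : ℕ) :
    iteratedDeriv n f x = n.factorial • p.coeff n := by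
  obtain ⟨r, hr⟩ := hp
  rw [iteratedDeriv_eq_iteratedFDeriv, ← hr.factorial_smul 1 n, FormalMultilinearSeries.coeff]
  rfl

theorem AnalyticAt.iteratedDeriv_succ_eq_succ_smul_iteratedDeriv_dslope
    (hf : AnalyticAt 𝕜 f x) (n : ℕ) :
    iteratedDeriv (n + 1) f x = (n + 1) • iteratedDeriv n (dslope f x) x := by
  obtain ⟨p, hp⟩ := hf
  rw [hp.iteratedDeriv_eq_factorial_smul_coeff,
    hp.has_fpower_series_dslope_fslope.iteratedDeriv_eq_factorial_smul_coeff,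
    FormalMultilinearSeries.coeff_fslope, Nat.factorial_succ, mul_smul]

end Analytic

section CircleIntegral

variable {E : Type*} [NormedAddCommGroup E] [NormedSpace ℂ E] [CompleteSpace E]

theorem circleIntegral_inv_sub_pow_smul_dslope {f : ℂ → E} {c w : ℂ} {R : ℝ} (hR : 0 ≤ R)
    (hw : w ∉ sphere c R) (hf : ContinuousOn f (sphere c R)) (n : ℕ) :
    (∮ z in C(c, R), ((z - w) ^ (n + 1))⁻¹ • dslope f w z) =
      ∮ z in C(c, R), ((z - w) ^ (n + 2))⁻¹ • f z := by
  have hne : ∀ z ∈ sphere c R, z - w ≠ 0 := fun z hz =>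
    sub_ne_zero.mpr (ne_of_mem_of_not_mem hz hw)
  have hpow : ContinuousOn (fun z => ((z - w) ^ (n + 2))⁻¹) (sphere c R) :=
    ((continuousOn_id.sub continuousOn_const).pow _).inv₀ fun z hz => pow_ne_zero _ (hne z hz)
  have hconst : (∮ z in C(c, R), ((z - w) ^ (n + 2))⁻¹ • f w) = 0 := by
    rw [circleIntegral.integral_smul_const]
    convert zero_smul ℂ (f w)
    simpa [← zpow_natCast, ← zpow_neg] using
      circleIntegral.integral_sub_zpow_of_ne (n := -(n + 2 : ℤ)) (by omega) c w R
  calc (∮ z in C(c, R), ((z - w) ^ (n + 1))⁻¹ • dslope f w z)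
      = ∮ z in C(c, R),
          (((z - w) ^ (n + 2))⁻¹ • f z - ((z - w) ^ (n + 2))⁻¹ • f w) := by
        refine circleIntegral.integral_congr hR fun z hz => ?_
        rw [dslope_of_ne _ (sub_ne_zero.mp (hne z hz)), slope_def_module, smul_smul, ← mul_inv,
          ← pow_succ, smul_sub]
    _ = ∮ z in C(c, R), ((z - w) ^ (n + 2))⁻¹ • f z := by
        rw [circleIntegral.integral_sub ((hpow.fun_smul hf).circleIntegrable hR)
          ((hpow.fun_smul continuousOn_const).circleIntegrable hR), hconst, sub_zero]

theorem DifferentiableOn.iteratedDeriv_eq_smul_circleIntegral {f : ℂ → E} {c w : ℂ} {R : ℝ}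
    (hf : DifferentiableOn ℂ f (closedBall c R)) (hw : w ∈ ball c R) (n : ℕ) :
    iteratedDeriv n f w =
      ((n.factorial : ℂ) / (2 * π * I)) •
        ∮ z in C(c, R), ((z - w) ^ (n + 1))⁻¹ • f z := by
  have hmem : closedBall c R ∈ nhds w := closedBall_mem_nhds_of_mem hw
  induction n generalizing f with
  | zero =>
    simp only [zero_add, pow_one, hf.circleIntegral_sub_inv_smul hw, smul_smul, Nat.factorial_zero,
      Nat.cast_one, one_div_mul_cancel two_pi_I_ne_zero, one_smul, iteratedDeriv_zero]
  | succ n ih =>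
    have hR : 0 ≤ R := (nonempty_ball.mp ⟨w, hw⟩).le
    rw [(hf.analyticAt hmem).iteratedDeriv_succ_eq_succ_smul_iteratedDeriv_dslope,
      ih ((differentiableOn_dslope hmem).mpr hf),
      circleIntegral_inv_sub_pow_smul_dslope hR (sphere_disjoint_ball.notMem_of_mem_right hw)
        (hf.continuousOn.mono sphere_subset_closedBall),
      ← Nat.cast_smul_eq_nsmul ℂ, smul_smul]
    congr 1
    push_cast [Nat.factorial_succ]
    ring

end CircleIntegral

theorem cauchy_integral_formula_deriv_general (f : ℂ → ℂ) (c : ℂ) (R : ℝ)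
    (hf : ∀ z ∈ closedBall c R, DifferentiableAt ℂ f z)
    (n : ℕ) (z₀ : ℂ) (hz₀ : ‖z₀ - c‖ < R) :
    iteratedDeriv n f z₀ =
      ((n.factorial : ℂ) / (2 * Real.pi * Complex.I)) *
        ∮ z in C(c, R), f z / (z - z₀) ^ (n + 1) := by
  simpa only [smul_eq_mul, inv_mul_eq_div] using
    DifferentiableOn.iteratedDeriv_eq_smul_circleIntegral
      (fun z hz => (hf z hz).differentiableWithinAt) (mem_ball_iff_norm.mpr hz₀) n

/-- Cauchy integral formula for derivatives. -/
theorem cauchy_integral_formula_deriv (f : ℂ → ℂ) (c : ℂ) (R : ℝ) (hR : 0 < R)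
    (hf : ∀ z ∈ closedBall c R, DifferentiableAt ℂ f z)
    (n : ℕ) (z₀ : ℂ) (hz₀ : ‖z₀ - c‖ < R) :
    iteratedDeriv n f z₀ =
      ((n.factorial : ℂ) / (2 * Real.pi * Complex.I)) *
        ∮ z in C(c, R), f z / (z - z₀) ^ (n + 1) :=
  cauchy_integral_formula_deriv_general f c R hf n z₀ hz₀
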